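/- Let G be a finite p-stable group with C_G(O_p(G)) ≤ O_p(G), let P be a Sylow p-subgroup of G, and let A be an abelian normal subgroup of P. Then A ≤ O_p(G). -/

import Mathlib

open Subgroup
open scoped commutatorElement

/-- The `p`-core `O_p(G)`: the largest normal `p`-subgroup of `G`. -/
noncomputable def pCore (p : ℕ) (G : Type*) [Group G] : Subgroup G :=
  ⨆ N ∈ {N : Subgroup G | N.Normal ∧ IsPGroup p N}, N

instance centralizer_subgroupOf_normalizer_normal {G : Type*} [Group G] (Q : Subgroup G) :
    ((Subgroup.centralizer (Q : Set G)).subgroupOf (Subgroup.normalizer (Q : Set G))).Normal :=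
  Q.normalizerMonoidHom_ker ▸ Q.normalizerMonoidHom.normal_ker

/-- `G` is `p`-stable: whenever `Q` is a `p`-subgroup, `g ∈ N_G(Q)` and `[Q,g,g] = 1`,
the coset `g C_G(Q)` lies in `O_p(N_G(Q)/C_G(Q))`. -/
def IsPStable (p : ℕ) (G : Type*) [Group G] : Prop :=
  ∀ (Q : Subgroup G), IsPGroup p Q → ∀ (g : G) (hg : g ∈ (Subgroup.normalizer (Q : Set G))),
    (∀ q ∈ Q, ⁅⁅q, g⁆, g⁆ = 1) →
    (QuotientGroup.mk (s := (Subgroup.centralizer (Q : Set G)).subgroupOf (Subgroup.normalizer (Q : Set G)))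
        ⟨g, hg⟩) ∈
      pCore p ((Subgroup.normalizer (Q : Set G)) ⧸ (Subgroup.centralizer (Q : Set G)).subgroupOf (Subgroup.normalizer (Q : Set G)))

/-- `G` is `p`-nilpotent: it has a normal `p`-complement, i.e. a normal subgroup of order
coprime to `p` which is a complement to a Sylow `p`-subgroup. -/
def IsPNilpotent (p : ℕ) (G : Type*) [Group G] : Prop :=
  ∃ N : Subgroup G, N.Normal ∧ (Nat.card N).Coprime p ∧
    ∃ P : Sylow p G, N.IsComplement' P

/-- `D` is strongly closed in `P` with respect to `G`. -/
def IsStronglyClosed {G : Type*} [Group G] (P D : Subgroup G) : Prop :=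
  ∀ U : Set G, U ⊆ (D : Set G) → ∀ g : G,
    (fun u => g⁻¹ * u * g) '' U ⊆ (P : Set G) → (fun u => g⁻¹ * u * g) '' U ⊆ (D : Set G)

open Classical in
/-- `I_𝒜 = ⋂_{A ∈ 𝒜} A`, with the convention that `I_∅` is the trivial subgroup. -/
noncomputable def interA {G : Type*} [Group G] (𝒜 : Set (Subgroup G)) : Subgroup G :=
  if 𝒜 = ∅ then ⊥ else sInf 𝒜

/-- `𝒜|Q`, the members of `𝒜` contained in `Q`. -/
def restrictA {G : Type*} [Group G] (𝒜 : Set (Subgroup G)) (Q : Subgroup G) :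
    Set (Subgroup G) := {A ∈ 𝒜 | A ≤ Q}

/-- `A^b = b⁻¹ A b`. -/
def conjSub {G : Type*} [Group G] (A : Subgroup G) (b : G) : Subgroup G :=
  A.map (MulAut.conj b⁻¹).toMonoidHom

/-- `[A, b]`, the subgroup generated by the commutators `⁅a, b⁆` with `a ∈ A`. -/
def commSub {G : Type*} [Group G] (A : Subgroup G) (b : G) : Subgroup G :=
  Subgroup.closure {x | ∃ a ∈ A, x = ⁅a, b⁆}

/-! Since `O_p(G)` is normal, `N_G(O_p(G)) = G`, and for `a ∈ A` and `q ∈ O_p(G) ≤ P` the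
commutator `[q, a]` lies in the abelian group `A`, so `[q, a, a] = 1`. By `p`-stability the image
of `a` in `G / C_G(O_p(G))` lies in the `p`-core of that quotient. Because `C_G(O_p(G))` is a
`p`-group, the preimage of that `p`-core is a normal `p`-subgroup of `G`, hence lies in `O_p(G)`. -/

section PCore

variable {p : ℕ} {G H : Type*} [Group G] [Group H]

instance pCore_normal : (pCore p G).Normal :=
  biSup_normal _ _ fun _ hN => hN.1

theorem isPGroup_pCore : IsPGroup p (pCore p G) :=
  Sylow.biSup_of_normal _ _ (fun _ hN => hN.2) fun _ hN => hN.1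

theorem le_pCore {N : Subgroup G} (hNn : N.Normal) (hNp : IsPGroup p N) : N ≤ pCore p G :=
  le_iSup₂ (f := fun N (_ : N ∈ {N : Subgroup G | N.Normal ∧ IsPGroup p N}) => N) N ⟨hNn, hNp⟩

theorem pCore_le_sylow (P : Sylow p G) : pCore p G ≤ P :=
  isPGroup_pCore.le_sylow_of_normal P

theorem map_pCore_le_of_surjective {f : H →* G} (hf : Function.Surjective f) :
    (pCore p H).map f ≤ pCore p G :=
  le_pCore (pCore_normal.map f hf) (isPGroup_pCore.map f)

theorem comap_pCore_le_of_isPGroup_ker {f : H →* G} (hf : IsPGroup p f.ker) :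
    (pCore p G).comap f ≤ pCore p H :=
  le_pCore (pCore_normal.comap f) (isPGroup_pCore.comap_of_ker_isPGroup f hf)

end PCore

theorem commutatorElement_commutatorElement_eq_one_of_mem_normalizer {G : Type*} [Group G]
    {A : Subgroup G} [IsMulCommutative A] {q a : G} (hq : q ∈ normalizer (A : Set G))
    (ha : a ∈ A) : ⁅⁅q, a⁆, a⁆ = 1 := by
  have hqa : ⁅q, a⁆ ∈ A := by
    rw [commutatorElement_def]
    exact mul_mem ((mem_normalizer_iff.mp hq a).mp ha) (inv_mem ha)
  exact commutatorElement_eq_one_iff_mul_comm.mpr (setLike_mul_comm hqa ha)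

theorem abelian_normal_in_sylow_le_pCore_general
    {p : ℕ} {G : Type*} [Group G]
    (hstable : IsPStable p G)
    (hC : Subgroup.centralizer ((pCore p G : Subgroup G) : Set G) ≤ pCore p G)
    (P : Sylow p G) (A : Subgroup G) (hA : IsMulCommutative A)
    (hAnorm : (P : Subgroup G) ≤ (Subgroup.normalizer (A : Set G))) :
    A ≤ pCore p G := by
  set O := pCore p G
  have hN : normalizer (O : Set G) = ⊤ := normalizer_eq_top O
  have hker : IsPGroup p (QuotientGroup.mk' ((centralizer (O : Set G)).subgroupOf
      (normalizer (O : Set G)))).ker := by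
    rw [QuotientGroup.ker_mk']
    exact (isPGroup_pCore.to_le hC).comap_subtype
  have hsurj : Function.Surjective (normalizer (O : Set G)).subtype :=
    fun g => ⟨⟨g, hN ▸ mem_top g⟩, rfl⟩
  intro a ha
  have haN : a ∈ normalizer (O : Set G) := hN ▸ mem_top a
  have hcomm : ∀ q ∈ O, ⁅⁅q, a⁆, a⁆ = 1 := fun q hq =>
    commutatorElement_commutatorElement_eq_one_of_mem_normalizer (hAnorm (pCore_le_sylow P hq)) ha
  have haCore : (⟨a, haN⟩ : normalizer (O : Set G)) ∈ pCore p (normalizer (O : Set G)) :=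
    comap_pCore_le_of_isPGroup_ker hker (hstable O isPGroup_pCore a haN hcomm)
  exact map_pCore_le_of_surjective hsurj ⟨_, haCore, rfl⟩

/-- Let `G` be a finite `p`-stable group with `C_G(O_p(G)) ≤ O_p(G)`, let
`P` be a Sylow `p`-subgroup of `G`, and let `A` be an abelian normal subgroup of `P`.
Then `A ≤ O_p(G)`. -/
theorem abelian_normal_in_sylow_le_pCore
    {p : ℕ} (hp : p.Prime) {G : Type*} [Group G] [Finite G]
    (hstable : IsPStable p G)
    (hC : Subgroup.centralizer ((pCore p G : Subgroup G) : Set G) ≤ pCore p G)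
    (P : Sylow p G) (A : Subgroup G) (hA : IsMulCommutative A)
    (hAP : A ≤ (P : Subgroup G)) (hAnorm : (P : Subgroup G) ≤ (Subgroup.normalizer (A : Set G))) :
    A ≤ pCore p G :=
  abelian_normal_in_sylow_le_pCore_general hstable hC P A hA hAnorm
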